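/- Let M = (m_{ij})_{i,j∈[d]} be an irreducible nonnegative d×d matrix with spectral radius 1 (so there exist positive left and right 1-eigenvectors a and b with ⟨a,1⟩ = ⟨a,b⟩ = 1), and suppose m_{dd} < 1. Define the (d−1)×(d−1) matrix M̃ by m̃_{jk} = m_{jk} + m_{jd}m_{dk}/(1−m_{dd}) for j,k ∈ [d−1]. Then the vectors ã = (a₁,…,a_{d−1})/(1−a_d) and b̃ = (1−a_d)/(1−a_d b_d) · (b₁,…,b_{d−1}) are left and right 1-eigenvectors of M̃ satisfying ⟨ã, 1⟩ = ⟨ã, b̃⟩ = 1. -/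

import Mathlib

open Matrix Finset

/-!
Eliminating type `d` is the Schur complement of `1 - M` with respect to its last entry:
since `M` fixes `a` and `b`, the censored matrix `M̃` fixes their restrictions to the
remaining types. Removing the `d`-th term from `⟨a,1⟩ = ⟨a,b⟩ = 1` leaves `1 - a_d` and
`1 - a_d b_d`, which positivity of the other terms keeps nonzero; rescaling by them gives
the normalizations.
-/

namespace Matrix

variable {K : Type*} [Field K] {n : ℕ}

/-- The matrix of the process that skips its visits to the last type. -/
def removeLast (M : Matrix (Fin (n + 1)) (Fin (n + 1)) K) : Matrix (Fin n) (Fin n) K :=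
  fun j k => M j.castSucc k.castSucc +
    M j.castSucc (Fin.last n) * M (Fin.last n) k.castSucc / (1 - M (Fin.last n) (Fin.last n))

theorem removeLast_transpose (M : Matrix (Fin (n + 1)) (Fin (n + 1)) K) :
    removeLast Mᵀ = (removeLast M)ᵀ := by
  ext j k
  simp only [removeLast, transpose_apply]
  ring

theorem sum_castSucc_mul_of_vecMul_eq {M : Matrix (Fin (n + 1)) (Fin (n + 1)) K}
    {a : Fin (n + 1) → K} (haM : vecMul a M = a) (k : Fin (n + 1)) :
    ∑ j : Fin n, a j.castSucc * M j.castSucc k = a k - a (Fin.last n) * M (Fin.last n) k := by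
  have h := congrFun haM k
  rw [vecMul, dotProduct, Fin.sum_univ_castSucc] at h
  exact eq_sub_of_add_eq h

theorem vecMul_removeLast {M : Matrix (Fin (n + 1)) (Fin (n + 1)) K} {a : Fin (n + 1) → K}
    (haM : vecMul a M = a) (hM : M (Fin.last n) (Fin.last n) ≠ 1) :
    vecMul (a ∘ Fin.castSucc) (removeLast M) = a ∘ Fin.castSucc := by
  have hM' : 1 - M (Fin.last n) (Fin.last n) ≠ 0 := sub_ne_zero.mpr hM.symm
  ext k
  have hk := sum_castSucc_mul_of_vecMul_eq haM k.castSucc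
  have hlast := sum_castSucc_mul_of_vecMul_eq haM (Fin.last n)
  calc vecMul (a ∘ Fin.castSucc) (removeLast M) k
      = ∑ j : Fin n, a j.castSucc * M j.castSucc k.castSucc +
          (∑ j : Fin n, a j.castSucc * M j.castSucc (Fin.last n)) *
            (M (Fin.last n) k.castSucc / (1 - M (Fin.last n) (Fin.last n))) := by
        simp only [vecMul, dotProduct, removeLast, Function.comp_apply, sum_mul,
          ← sum_add_distrib]
        refine sum_congr rfl fun j _ => ?_
        ring
    _ = a k.castSucc := by
        rw [hk, hlast]
        field_simp
        ring

theorem removeLast_mulVec {M : Matrix (Fin (n + 1)) (Fin (n + 1)) K} {b : Fin (n + 1) → K}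
    (hMb : M *ᵥ b = b) (hM : M (Fin.last n) (Fin.last n) ≠ 1) :
    removeLast M *ᵥ (b ∘ Fin.castSucc) = b ∘ Fin.castSucc := by
  rw [← vecMul_transpose, ← removeLast_transpose]
  exact vecMul_removeLast (by rwa [vecMul_transpose]) hM

end Matrix

theorem Fin.apply_last_lt_sum {n : ℕ} (hn : 1 ≤ n) {f : Fin (n + 1) → ℝ}
    (hf : ∀ i, 0 < f i) : f (Fin.last n) < ∑ i, f i := by
  have : Nonempty (Fin n) := Fin.pos_iff_nonempty.mp hn
  rw [Fin.sum_univ_castSucc, lt_add_iff_pos_left]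
  exact sum_pos (fun j _ => hf j.castSucc) univ_nonempty

theorem type_removal_eigenvectors_general (n : ℕ) (hn : 1 ≤ n)
    (M : Matrix (Fin (n + 1)) (Fin (n + 1)) ℝ)
    (a b : Fin (n + 1) → ℝ) (ha : ∀ i, 0 < a i) (hb : ∀ i, 0 < b i)
    (haM : Matrix.vecMul a M = a) (hMb : M.mulVec b = b)
    (ha1 : ∑ i, a i = 1) (hab : ∑ i, a i * b i = 1)
    (hmdd : M (Fin.last n) (Fin.last n) < 1) :
    let d := Fin.last n
    let Mt : Matrix (Fin n) (Fin n) ℝ := fun j k =>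
      M j.castSucc k.castSucc + M j.castSucc d * M d k.castSucc / (1 - M d d)
    let at' : Fin n → ℝ := fun k => a k.castSucc / (1 - a d)
    let bt : Fin n → ℝ := fun k => (1 - a d) / (1 - a d * b d) * b k.castSucc
    Matrix.vecMul at' Mt = at' ∧ Mt.mulVec bt = bt ∧
      (∑ k, at' k = 1) ∧ (∑ k, at' k * bt k = 1) := by
  intro d Mt at' bt
  have ha_d : a d < 1 := ha1 ▸ Fin.apply_last_lt_sum hn ha
  have hab_d : a d * b d < 1 := hab ▸ Fin.apply_last_lt_sum hn fun i => mul_pos (ha i) (hb i)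
  have hsum_a : ∑ k : Fin n, a k.castSucc = 1 - a d := by
    rw [← ha1, Fin.sum_univ_castSucc, add_sub_cancel_right]
  have hsum_ab : ∑ k : Fin n, a k.castSucc * b k.castSucc = 1 - a d * b d := by
    rw [← hab, Fin.sum_univ_castSucc (fun i => a i * b i), add_sub_cancel_right]
  have hat : at' = (1 - a d)⁻¹ • (a ∘ Fin.castSucc) := by
    ext k; simp only [at', Pi.smul_apply, Function.comp_apply, smul_eq_mul]; ring
  have hbt : bt = ((1 - a d) / (1 - a d * b d)) • (b ∘ Fin.castSucc) := rfl
  refine ⟨?_, ?_, ?_, ?_⟩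
  · rw [hat, smul_vecMul]
    exact congrArg _ (vecMul_removeLast haM hmdd.ne)
  · rw [hbt, mulVec_smul]
    exact congrArg _ (removeLast_mulVec hMb hmdd.ne)
  · simp only [at', ← sum_div, hsum_a]
    exact div_self (sub_pos.mpr ha_d).ne'
  · have hterm : ∀ k : Fin n, at' k * bt k = a k.castSucc * b k.castSucc / (1 - a d * b d) := by
      intro k
      simp only [at', bt]
      field_simp [(sub_pos.mpr ha_d).ne']
    simp only [hterm, ← sum_div, hsum_ab]
    exact div_self (sub_pos.mpr hab_d).ne'

/-- Removing type `d` from a critical irreducible mean matrix `M` (with `m_{dd} < 1`)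
produces the matrix `M̃` with entries `m̃_{jk} = m_{jk} + m_{jd} m_{dk}/(1−m_{dd})`,
whose left and right `1`-eigenvectors, normalized as `⟨ã,1⟩ = ⟨ã,b̃⟩ = 1`, are
`ã = (a₁,…,a_{d−1})/(1−a_d)` and `b̃ = (1−a_d)/(1−a_d b_d)·(b₁,…,b_{d−1})`. -/
theorem type_removal_eigenvectors (n : ℕ) (hn : 1 ≤ n)
    (M : Matrix (Fin (n + 1)) (Fin (n + 1)) ℝ)
    (hM : ∀ i j, 0 ≤ M i j)
    (hirr : ∀ i j, ∃ k : ℕ, 0 < (M ^ k) i j)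
    (a b : Fin (n + 1) → ℝ) (ha : ∀ i, 0 < a i) (hb : ∀ i, 0 < b i)
    (haM : Matrix.vecMul a M = a) (hMb : M.mulVec b = b)
    (ha1 : ∑ i, a i = 1) (hab : ∑ i, a i * b i = 1)
    (hmdd : M (Fin.last n) (Fin.last n) < 1) :
    let d := Fin.last n
    let Mt : Matrix (Fin n) (Fin n) ℝ := fun j k =>
      M j.castSucc k.castSucc + M j.castSucc d * M d k.castSucc / (1 - M d d)
    let at' : Fin n → ℝ := fun k => a k.castSucc / (1 - a d)
    let bt : Fin n → ℝ := fun k => (1 - a d) / (1 - a d * b d) * b k.castSucc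
    Matrix.vecMul at' Mt = at' ∧ Mt.mulVec bt = bt ∧
      (∑ k, at' k = 1) ∧ (∑ k, at' k * bt k = 1) :=
  type_removal_eigenvectors_general n hn M a b ha hb haM hMb ha1 hab hmdd
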